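/- arXiv:2506.04192 — 5 statements merged into one kernel-verified Lean document; each statement's English description precedes it below -/
import Mathlib

section
/- Let n ≥ 1, λ > 0, β₁ ∈ ℝ, β₂ ∈ ℝ with β₂ ≠ 0, step sizes η : ℕ → ℝ, a gradient sequence ḡ : ℕ → (Fin n → ℝ), and an initial point x₁ : Fin n → ℝ. Define the Lion iterates by m₀ = 0 and, for t ≥ 1: c_t = β₁·m_{t-1} + (1−β₁)·ḡ_t; x_{t+1} = x_t − η_t·(sign(c_t) + λ·x_t), where sign is applied coordinatewise with sign(0) = 0; m_t = β₂·m_{t-1} + (1−β₂)·ḡ_t. Define the stochastic Frank–Wolfe iterates by g₀ = 0, x'₁ = x₁ and, for t ≥ 1: g_t = β₂·g_{t-1} + (1−β₂)·ḡ_t; ĝ_t = (β₁/β₂)·g_t + (1 − β₁/β₂)·ḡ_t; u_t = −(1/λ)·sign(ĝ_t); x'_{t+1} = (1 − λ·η_t)·x'_t + λ·η_t·u_t. Then for all t ≥ 1 one has x_t = x'_t, m_t = g_t and c_t = ĝ_t; moreover every coordinate of u_t has absolute value at most 1/λ and ∑ᵢ (u_t)ᵢ·(ĝ_t)ᵢ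 = min { ∑ᵢ vᵢ·(ĝ_t)ᵢ : v : Fin n → ℝ, ∀ i, |vᵢ| ≤ 1/λ }, i.e., Lion is an instance of stochastic Frank–Wolfe over the ℓ∞-ball of radius 1/λ with momentum parameters γ = 1−β₂, β₁ and step sizes λ·η_t. -/
lemma abs_real_sign_le (x : ℝ) : |Real.sign x| ≤ 1 := by
  rcases lt_trichotomy x 0 with h | h | h
  · rw [Real.sign_of_neg h]; norm_num
  · simp [h]
  · rw [Real.sign_of_pos h]; norm_num

lemma real_sign_mul_self (x : ℝ) : Real.sign x * x = |x| := by
  rcases lt_trichotomy x 0 with h | h | h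
  · rw [Real.sign_of_neg h, abs_of_neg h]; ring
  · simp [h]
  · rw [Real.sign_of_pos h, abs_of_pos h]; ring

/-- Lion is an instance of stochastic Frank–Wolfe over the ℓ∞-ball of radius `1/λ`. -/
theorem lion_is_stochastic_frank_wolfe
    (n : ℕ) (hn : 1 ≤ n) (lam : ℝ) (hlam : 0 < lam)
    (β₁ β₂ : ℝ) (hβ₂ : β₂ ≠ 0)
    (η : ℕ → ℝ) (gbar : ℕ → Fin n → ℝ) (x₁ : Fin n → ℝ)
    -- Lion iterates
    (m c x : ℕ → Fin n → ℝ)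
    (hm0 : m 0 = 0) (hx1 : x 1 = x₁)
    (hc : ∀ t, 1 ≤ t → c t = fun i => β₁ * m (t - 1) i + (1 - β₁) * gbar t i)
    (hx : ∀ t, 1 ≤ t →
      x (t + 1) = fun i => x t i - η t * (Real.sign (c t i) + lam * x t i))
    (hm : ∀ t, 1 ≤ t → m t = fun i => β₂ * m (t - 1) i + (1 - β₂) * gbar t i)
    -- stochastic Frank–Wolfe iterates (momentum γ = 1 - β₂, step sizes λ·η_t)
    (g ghat u x' : ℕ → Fin n → ℝ)
    (hg0 : g 0 = 0) (hx'1 : x' 1 = x₁)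
    (hg : ∀ t, 1 ≤ t → g t = fun i => β₂ * g (t - 1) i + (1 - β₂) * gbar t i)
    (hghat : ∀ t, 1 ≤ t →
      ghat t = fun i => (β₁ / β₂) * g t i + (1 - β₁ / β₂) * gbar t i)
    (hu : ∀ t, 1 ≤ t → u t = fun i => -(1 / lam) * Real.sign (ghat t i))
    (hx' : ∀ t, 1 ≤ t →
      x' (t + 1) = fun i => (1 - lam * η t) * x' t i + lam * η t * u t i) :
    ∀ t, 1 ≤ t →
      x t = x' t ∧ m t = g t ∧ c t = ghat t ∧
      (∀ i : Fin n, |u t i| ≤ 1 / lam) ∧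
      IsLeast {s : ℝ | ∃ v : Fin n → ℝ, (∀ i, |v i| ≤ 1 / lam) ∧
          s = ∑ i : Fin n, v i * ghat t i}
        (∑ i : Fin n, u t i * ghat t i) := by
  have hmg : ∀ t, m t = g t := by
    intro t
    induction t with
    | zero => rw [hm0, hg0]
    | succ k ih =>
      rw [hm (k + 1) (Nat.le_add_left 1 k), hg (k + 1) (Nat.le_add_left 1 k)]
      simp [ih]
  have hcg : ∀ t, 1 ≤ t → c t = ghat t := by
    intro t ht
    rw [hc t ht, hghat t ht, hg t ht, hmg]
    funext i
    field_simp
    ring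
  have hub : ∀ t, 1 ≤ t → ∀ i : Fin n, |u t i| ≤ 1 / lam := by
    intro t ht i
    rw [hu t ht]
    simp only
    rw [abs_mul, abs_neg, abs_of_pos (by positivity : (0:ℝ) < 1 / lam)]
    calc 1 / lam * |Real.sign (ghat t i)| ≤ 1 / lam * 1 := by
          exact mul_le_mul_of_nonneg_left (abs_real_sign_le _) (by positivity)
      _ = 1 / lam := by ring
  have hxx : ∀ t, 1 ≤ t → x t = x' t := by
    intro t ht
    induction t, ht using Nat.le_induction with
    | base => rw [hx1, hx'1]
    | succ k hk ih =>
      rw [hx k hk, hx' k hk, hu k hk, ← hcg k hk, ih]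
      funext i
      field_simp
      ring
  intro t ht
  refine ⟨hxx t ht, hmg t, hcg t ht, hub t ht, ⟨u t, hub t ht, rfl⟩, ?_⟩
  rintro s ⟨v, hv, rfl⟩
  apply Finset.sum_le_sum
  intro i _
  have h1 : u t i * ghat t i = -(1 / lam * |ghat t i|) := by
    rw [hu t ht]
    simp only
    rw [mul_assoc, real_sign_mul_self]
    ring
  have h2 : -(1 / lam * |ghat t i|) ≤ v i * ghat t i := by
    have : |v i * ghat t i| ≤ 1 / lam * |ghat t i| := by
      rw [abs_mul]
      exact mul_le_mul_of_nonneg_right (hv i) (abs_nonneg _)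
    linarith [neg_abs_le (v i * ghat t i)]
  linarith
end

section
/- Let m, n ≥ 1, μ ∈ [0,1), λ > 0, step sizes η : ℕ → ℝ, a sequence of matrices G : ℕ → Matrix (Fin m) (Fin n) ℝ, a sequence O : ℕ → Matrix (Fin m) (Fin n) ℝ, and an initial matrix X₁. Define the Muon iterates by B₀ = 0 and, for t ≥ 1: B_t = μ·B_{t-1} + G_t and X_{t+1} = X_t − η_t·(O_t + λ·X_t). Define the stochastic Frank–Wolfe iterates by g₀ = 0, X'₁ = X₁ and, for t ≥ 1: g_t = μ·g_{t-1} + (1−μ)·G_t, u_t = −(1/λ)·O_t, X'_{t+1} = (1 − λ·η_t)·X'_t + λ·η_t·u_t. Then: (i) B_t = (1−μ)⁻¹·g_t for all t ≥ 0; (ii) X_t = X'_t for all t ≥ 1; (iii) if in addition for each t ≥ 1 the matrix O_t satisfies ‖O_t‖₂ ≤ 1 and ⟨O_t, B_t⟩_F = sup { ⟨A, B_t⟩_F : A ∈ Matrix (Fin m) (Fin n) ℝ, ‖A‖₂ ≤ 1 }, then ⟨u_t, g_t⟩_F = inf { ⟨U, g_t⟩_F : ‖U‖₂ ≤ 1/λ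 }. Hence Muon with weight decay is an instance of stochastic Frank–Wolfe over the spectral-norm ball of radius 1/λ with momentum parameters γ = 1−μ, β₁ = μ and step sizes λ·η_t. -/
/-- The spectral norm of a real matrix: the operator norm of the linear map
`x ↦ A.mulVec x` between the corresponding Euclidean spaces. -/
noncomputable def spectralNorm' {m n : ℕ} (A : Matrix (Fin m) (Fin n) ℝ) : ℝ :=
  ‖LinearMap.toContinuousLinearMap (Matrix.toEuclideanLin A)‖

/-- The Frobenius inner product of two real matrices. -/
def frobInner {m n : ℕ} (A B : Matrix (Fin m) (Fin n) ℝ) : ℝ :=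
  ∑ i : Fin m, ∑ j : Fin n, A i j * B i j

/-!
Unrolling the two momentum recursions shows `g_t = (1 - μ) B_t`, and the Muon update
`X - η (O + λ X)` is, after expanding, the convex combination `(1 - λη) X + λη (-(1/λ) O)`.
Finally, `A ↦ -(1/λ) A` maps the unit spectral ball onto the ball of radius `1/λ` and turns
`⟨A, B⟩` into `-(1/λ) ⟨A, B⟩`, so a maximiser of `⟨·, B_t⟩` over the unit ball becomes a
minimiser of `⟨·, g_t⟩ = (1 - μ) ⟨·, B_t⟩` over the ball of radius `1/λ`.
-/

section Iterates

variable {K V : Type*} [Field K] [AddCommGroup V] [Module K V]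

theorem momentum_eq_inv_smul_of_rescaled {μ c : K} (hc : c ≠ 0) {B g G : ℕ → V}
    (h0 : B 0 = c⁻¹ • g 0) (hB : ∀ t, B (t + 1) = μ • B t + G (t + 1))
    (hg : ∀ t, g (t + 1) = μ • g t + c • G (t + 1)) (t : ℕ) : B t = c⁻¹ • g t := by
  induction t with
  | zero => exact h0
  | succ t ih =>
    rw [hB, hg, ih, smul_add, smul_smul, smul_smul, smul_smul, inv_mul_cancel₀ hc, one_smul,
      mul_comm]

theorem sub_smul_add_smul_eq_convex_step {lam η : K} (hlam : lam ≠ 0) (X O : V) :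
    X - η • (O + lam • X) = (1 - lam * η) • X + (lam * η) • ((-(1 / lam)) • O) := by
  rw [smul_smul, show lam * η * -(1 / lam) = -η by field_simp]
  match_scalars <;> ring

end Iterates

section SpectralBall

variable {m n : ℕ}

theorem spectralNorm'_smul (c : ℝ) (A : Matrix (Fin m) (Fin n) ℝ) :
    spectralNorm' (c • A) = |c| * spectralNorm' A := by
  rw [spectralNorm', map_smul, map_smul, norm_smul, Real.norm_eq_abs, spectralNorm']

theorem frobInner_smul_left (c : ℝ) (A B : Matrix (Fin m) (Fin n) ℝ) :
    frobInner (c • A) B = c * frobInner A B := by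
  simp only [frobInner, Matrix.smul_apply, smul_eq_mul, Finset.mul_sum, mul_assoc]

theorem frobInner_smul_right (c : ℝ) (A B : Matrix (Fin m) (Fin n) ℝ) :
    frobInner A (c • B) = c * frobInner A B := by
  simp only [frobInner, Matrix.smul_apply, smul_eq_mul, Finset.mul_sum, mul_left_comm]

theorem spectralNorm'_neg_smul_le_iff {r : ℝ} (hr : 0 < r) (A : Matrix (Fin m) (Fin n) ℝ) :
    spectralNorm' ((-r) • A) ≤ r ↔ spectralNorm' A ≤ 1 := by
  rw [spectralNorm'_smul, abs_neg, abs_of_pos hr, mul_le_iff_le_one_right hr]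

theorem isLeast_frobInner_neg_smul {r c : ℝ} (hr : 0 < r) (hc : 0 ≤ c)
    {O B : Matrix (Fin m) (Fin n) ℝ} (hO : spectralNorm' O ≤ 1)
    (hmax : IsGreatest {s : ℝ | ∃ A : Matrix (Fin m) (Fin n) ℝ,
      spectralNorm' A ≤ 1 ∧ s = frobInner A B} (frobInner O B)) :
    IsLeast {s : ℝ | ∃ U : Matrix (Fin m) (Fin n) ℝ,
      spectralNorm' U ≤ r ∧ s = frobInner U (c • B)} (frobInner ((-r) • O) (c • B)) := by
  refine ⟨⟨(-r) • O, (spectralNorm'_neg_smul_le_iff hr O).2 hO, rfl⟩, ?_⟩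
  rintro s ⟨U, hU, rfl⟩
  have hU' : spectralNorm' ((-r⁻¹) • U) ≤ 1 := by
    rwa [← spectralNorm'_neg_smul_le_iff hr, smul_smul, neg_mul_neg, mul_inv_cancel₀ hr.ne',
      one_smul]
  have hle := hmax.2 ⟨_, hU', rfl⟩
  rw [frobInner_smul_left] at hle
  rw [frobInner_smul_right, frobInner_smul_right, frobInner_smul_left]
  have hmin : -r * frobInner O B ≤ frobInner U B := by
    have h := mul_le_mul_of_nonneg_left hle hr.le
    rw [← mul_assoc, mul_neg, mul_inv_cancel₀ hr.ne', neg_one_mul] at h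
    linarith
  exact mul_le_mul_of_nonneg_left hmin hc

end SpectralBall

theorem muon_is_stochastic_frank_wolfe_general
    (m n : ℕ)
    (μ : ℝ) (hμ : μ ∈ Set.Ico (0 : ℝ) 1) (lam : ℝ) (hlam : 0 < lam)
    (η : ℕ → ℝ)
    (G O : ℕ → Matrix (Fin m) (Fin n) ℝ) (X₁ : Matrix (Fin m) (Fin n) ℝ)
    -- Muon iterates
    (B X : ℕ → Matrix (Fin m) (Fin n) ℝ)
    (hB0 : B 0 = 0) (hX1 : X 1 = X₁)
    (hB : ∀ t, 1 ≤ t → B t = μ • B (t - 1) + G t)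
    (hX : ∀ t, 1 ≤ t → X (t + 1) = X t - η t • (O t + lam • X t))
    -- stochastic Frank–Wolfe iterates (γ = 1 - μ, β₁ = μ, step sizes λ·η_t)
    (g u X' : ℕ → Matrix (Fin m) (Fin n) ℝ)
    (hg0 : g 0 = 0) (hX'1 : X' 1 = X₁)
    (hg : ∀ t, 1 ≤ t → g t = μ • g (t - 1) + (1 - μ) • G t)
    (hu : ∀ t, 1 ≤ t → u t = (-(1 / lam)) • O t)
    (hX' : ∀ t, 1 ≤ t →
      X' (t + 1) = (1 - lam * η t) • X' t + (lam * η t) • u t) :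
    (∀ t : ℕ, B t = (1 - μ)⁻¹ • g t) ∧
    (∀ t, 1 ≤ t → X t = X' t) ∧
    (∀ t, 1 ≤ t →
      (spectralNorm' (O t) ≤ 1 ∧
        IsGreatest {s : ℝ | ∃ A : Matrix (Fin m) (Fin n) ℝ,
            spectralNorm' A ≤ 1 ∧ s = frobInner A (B t)} (frobInner (O t) (B t))) →
      IsLeast {s : ℝ | ∃ U : Matrix (Fin m) (Fin n) ℝ,
          spectralNorm' U ≤ 1 / lam ∧ s = frobInner U (g t)} (frobInner (u t) (g t))) := by
  have hμ1 : (0 : ℝ) < 1 - μ := sub_pos.2 hμ.2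
  have hBg : ∀ t, B t = (1 - μ)⁻¹ • g t :=
    momentum_eq_inv_smul_of_rescaled hμ1.ne' (by simp [hB0, hg0])
      (fun t ↦ by simpa using hB (t + 1) t.succ_pos) (fun t ↦ by simpa using hg (t + 1) t.succ_pos)
  refine ⟨hBg, fun t ht ↦ ?_, fun t ht ⟨hO, hmax⟩ ↦ ?_⟩
  · induction t, ht using Nat.le_induction with
    | base => rw [hX1, hX'1]
    | succ t ht ih =>
      rw [hX t ht, hX' t ht, hu t ht, ih, sub_smul_add_smul_eq_convex_step hlam.ne']
  · have hgB : g t = (1 - μ) • B t := by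
      rw [hBg, smul_smul, mul_inv_cancel₀ hμ1.ne', one_smul]
    rw [hgB, hu t ht]
    exact isLeast_frobInner_neg_smul (one_div_pos.2 hlam) hμ1.le hO hmax

/-- Muon with weight decay is an instance of stochastic Frank–Wolfe over the
spectral-norm ball of radius `1/λ`. -/
theorem muon_is_stochastic_frank_wolfe
    (m n : ℕ) (hm : 1 ≤ m) (hn : 1 ≤ n)
    (μ : ℝ) (hμ : μ ∈ Set.Ico (0 : ℝ) 1) (lam : ℝ) (hlam : 0 < lam)
    (η : ℕ → ℝ)
    (G O : ℕ → Matrix (Fin m) (Fin n) ℝ) (X₁ : Matrix (Fin m) (Fin n) ℝ)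
    -- Muon iterates
    (B X : ℕ → Matrix (Fin m) (Fin n) ℝ)
    (hB0 : B 0 = 0) (hX1 : X 1 = X₁)
    (hB : ∀ t, 1 ≤ t → B t = μ • B (t - 1) + G t)
    (hX : ∀ t, 1 ≤ t → X (t + 1) = X t - η t • (O t + lam • X t))
    -- stochastic Frank–Wolfe iterates (γ = 1 - μ, β₁ = μ, step sizes λ·η_t)
    (g u X' : ℕ → Matrix (Fin m) (Fin n) ℝ)
    (hg0 : g 0 = 0) (hX'1 : X' 1 = X₁)
    (hg : ∀ t, 1 ≤ t → g t = μ • g (t - 1) + (1 - μ) • G t)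
    (hu : ∀ t, 1 ≤ t → u t = (-(1 / lam)) • O t)
    (hX' : ∀ t, 1 ≤ t →
      X' (t + 1) = (1 - lam * η t) • X' t + (lam * η t) • u t) :
    (∀ t : ℕ, B t = (1 - μ)⁻¹ • g t) ∧
    (∀ t, 1 ≤ t → X t = X' t) ∧
    (∀ t, 1 ≤ t →
      (spectralNorm' (O t) ≤ 1 ∧
        IsGreatest {s : ℝ | ∃ A : Matrix (Fin m) (Fin n) ℝ,
            spectralNorm' A ≤ 1 ∧ s = frobInner A (B t)} (frobInner (O t) (B t))) →
      IsLeast {s : ℝ | ∃ U : Matrix (Fin m) (Fin n) ℝ,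
          spectralNorm' U ≤ 1 / lam ∧ s = frobInner U (g t)} (frobInner (u t) (g t))) :=
  muon_is_stochastic_frank_wolfe_general m n μ hμ lam hlam η G O X₁ B X hB0 hX1 hB hX g u X' hg0
    hX'1 hg hu hX'
end

section
/- Let H be a real inner product space, let C ⊆ H be nonempty with diameter at most D (i.e., ‖a − b‖ ≤ D for all a, b ∈ C), and let F : H → ℝ be differentiable with gradient ∇F satisfying F(y) ≤ F(x) + ⟪∇F(x), y − x⟫ + (L/2)·‖y − x‖² for all x, y ∈ H, where L ≥ 0. Let x ∈ C, ĝ ∈ H, η ∈ [0,1], and let u ∈ C satisfy ⟪u, ĝ⟫ ≤ ⟪v, ĝ⟫ for all v ∈ C. Set x⁺ := (1−η)·x + η·u. Then F(x⁺) ≤ F(x) − η·𝒢(x) + η·D·‖∇F(x) − ĝ‖ + (L/2)·η²·D², where 𝒢(x) := sup_{v ∈ C} ⟪v − x, −∇F(x)⟫ is the Frank–Wolfe gap of F on C at x. -/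
open scoped RealInnerProductSpace

/-- One-step descent inequality for a Frank–Wolfe update with an inexact gradient
estimate `ĝ` under `L`-smoothness:
`F(x⁺) ≤ F(x) − η·𝒢(x) + η·D·‖∇F(x) − ĝ‖ + (L/2)·η²·D²`,
where `𝒢(x) = sup_{v ∈ C} ⟪v − x, −∇F(x)⟫` is the Frank–Wolfe gap. -/
theorem frankWolfe_step_descent
    {H : Type*} [NormedAddCommGroup H] [InnerProductSpace ℝ H]
    (C : Set H) (hCne : C.Nonempty) (D : ℝ)
    (hdiam : ∀ a ∈ C, ∀ b ∈ C, ‖a - b‖ ≤ D)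
    (F : H → ℝ) (F' : H → H) (L : ℝ) (hL : 0 ≤ L)
    (hdiff : ∀ z : H, HasFDerivAt F (innerSL ℝ (F' z)) z)
    (hsmooth : ∀ x y : H, F y ≤ F x + ⟪F' x, y - x⟫ + L / 2 * ‖y - x‖ ^ 2)
    (x : H) (hx : x ∈ C) (ghat : H) (η : ℝ) (hη : η ∈ Set.Icc (0 : ℝ) 1)
    (u : H) (hu : u ∈ C) (hu_min : ∀ v ∈ C, ⟪u, ghat⟫ ≤ ⟪v, ghat⟫) :
    F ((1 - η) • x + η • u) ≤
      F x - η * sSup ((fun v => ⟪v - x, -F' x⟫) '' C)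
        + η * D * ‖F' x - ghat‖ + L / 2 * η ^ 2 * D ^ 2 := by
  obtain ⟨hη0, hη1⟩ := hη
  have hD : 0 ≤ D := by simpa using hdiam x hx x hx
  have herr : 0 ≤ ‖F' x - ghat‖ := norm_nonneg _
  -- bound the Frank–Wolfe gap
  have hsup : sSup ((fun v => ⟪v - x, -F' x⟫) '' C) ≤
      -⟪F' x, u - x⟫ + D * ‖F' x - ghat‖ := by
    apply csSup_le (hCne.image _)
    rintro _ ⟨v, hv, rfl⟩
    show ⟪v - x, -F' x⟫ ≤ -⟪F' x, u - x⟫ + D * ‖F' x - ghat‖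
    have hcs : ⟪F' x - ghat, u - v⟫ ≤ ‖F' x - ghat‖ * ‖u - v‖ :=
      real_inner_le_norm _ _
    have huv : ‖u - v‖ ≤ D := hdiam u hu v hv
    have hcs2 : ⟪F' x - ghat, u - v⟫ ≤ ‖F' x - ghat‖ * D :=
      hcs.trans (mul_le_mul_of_nonneg_left huv herr)
    have hmin : ⟪ghat, u - v⟫ ≤ 0 := by
      have h := hu_min v hv
      have h1 : ⟪ghat, u⟫ = ⟪u, ghat⟫ := real_inner_comm _ _
      have h2 : ⟪ghat, v⟫ = ⟪v, ghat⟫ := real_inner_comm _ _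
      rw [inner_sub_right]
      linarith
    have expand : ⟪v - x, -F' x⟫ =
        -⟪F' x, u - x⟫ + ⟪F' x - ghat, u - v⟫ + ⟪ghat, u - v⟫ := by
      simp only [inner_sub_left, inner_sub_right, inner_neg_right,
        real_inner_comm v (F' x), real_inner_comm x (F' x)]
      ring
    rw [expand]
    linarith
  -- smoothness step
  have hstep := hsmooth x ((1 - η) • x + η • u)
  have hdiffpt : (1 - η) • x + η • u - x = η • (u - x) := by module
  rw [hdiffpt, real_inner_smul_right, norm_smul] at hstep
  have hnorm : ‖u - x‖ ≤ D := hdiam u hu x hx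
  have hsq : ‖u - x‖ ^ 2 ≤ D ^ 2 := by
    nlinarith [norm_nonneg (u - x)]
  have habs : |η| = η := abs_of_nonneg hη0
  rw [Real.norm_eq_abs, habs] at hstep
  have hmulsup : η * sSup ((fun v => ⟪v - x, -F' x⟫) '' C) ≤
      η * (-⟪F' x, u - x⟫ + D * ‖F' x - ghat‖) :=
    mul_le_mul_of_nonneg_left hsup hη0
  have hquad : L / 2 * (η * ‖u - x‖) ^ 2 ≤ L / 2 * η ^ 2 * D ^ 2 := by
    have h1 : (η * ‖u - x‖) ^ 2 ≤ η ^ 2 * D ^ 2 := by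
      nlinarith [sq_nonneg η, norm_nonneg (u - x)]
    nlinarith
  have hexp : η * (-⟪F' x, u - x⟫ + D * ‖F' x - ghat‖) =
      -(η * ⟪F' x, u - x⟫) + η * D * ‖F' x - ghat‖ := by ring
  rw [hexp] at hmulsup
  linarith
end

section
/- Let H be a real inner product space, let C ⊆ H be nonempty with diameter at most D, and let F : H → ℝ be differentiable with gradient ∇F satisfying F(y) ≤ F(x) + ⟪∇F(x), y − x⟫ + (L/2)·‖y − x‖² for all x, y ∈ H, where L ≥ 0. Let T ≥ 1, let η : ℕ → ℝ with η_t ∈ [0,1] for all t, let x : ℕ → H with x₁ ∈ C, let ĝ : ℕ → H, and for each t ≥ 1 let u_t ∈ C satisfy ⟪u_t, ĝ_t⟫ ≤ ⟪v, ĝ_t⟫ for all v ∈ C, with x_{t+1} = (1 − η_t)·x_t + η_t·u_t. Then ∑_{t=1}^T η_t·𝒢(x_t) ≤ F(x₁) − F(x_{T+1}) + D·∑_{t=1}^T η_t·‖∇F(x_t) − ĝ_t‖ + (L/2)·D²·∑_{t=1}^T η_t², where 𝒢(x) := sup_{v ∈ C} ⟪v − x, −∇F(x)⟫. -/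
/-!
Each step is the smoothness inequality along the direction `u_t - x_t`, where the linear
minimization oracle with the inexact gradient `ĝ_t` loses at most `D‖∇F(x_t) - ĝ_t‖` against
the exact Frank–Wolfe gap. The iterates are convex combinations of points of `C`, so every
displacement `u_t - x_t` has norm at most `D`; summing the steps telescopes the values of `F`.
-/

open scoped RealInnerProductSpace
open Finset

noncomputable section

variable {H : Type*} [NormedAddCommGroup H] [InnerProductSpace ℝ H]

/-- The gap `𝒢(x)` of the paper, with `g = ∇F(x)`. -/
def frankWolfeGap (C : Set H) (g x : H) : ℝ :=
  sSup ((fun v => ⟪v - x, -g⟫) '' C)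

theorem frankWolfe_iterate_mem_convexHull {E : Type*} [AddCommGroup E] [Module ℝ E]
    {C : Set E} {η : ℕ → ℝ} (hη : ∀ t, η t ∈ Set.Icc (0 : ℝ) 1) {x u : ℕ → E}
    (hx1 : x 1 ∈ C) (hu_mem : ∀ t, 1 ≤ t → u t ∈ C)
    (hxrec : ∀ t, 1 ≤ t → x (t + 1) = (1 - η t) • x t + η t • u t) :
    ∀ t, 1 ≤ t → x t ∈ convexHull ℝ C := by
  intro t ht
  induction t, ht using Nat.le_induction with
  | base => exact subset_convexHull ℝ C hx1
  | succ t ht ih =>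
    rw [hxrec t ht]
    exact convex_convexHull ℝ C ih (subset_convexHull ℝ C (hu_mem t ht))
      (by linarith [(hη t).2]) (hη t).1 (by ring)

theorem norm_sub_le_of_mem_convexHull {C : Set H} {D : ℝ}
    (hdiam : ∀ a ∈ C, ∀ b ∈ C, ‖a - b‖ ≤ D) {v y : H} (hv : v ∈ C)
    (hy : y ∈ convexHull ℝ C) : ‖v - y‖ ≤ D := by
  have hball : convexHull ℝ C ⊆ Metric.closedBall v D :=
    convexHull_min (fun a ha => by simpa [dist_eq_norm] using hdiam a ha v hv)
      (convex_closedBall v D)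
  simpa [dist_eq_norm, norm_sub_rev] using hball hy

theorem frankWolfeGap_le_of_isMinOn {C : Set H} {D : ℝ}
    (hdiam : ∀ a ∈ C, ∀ b ∈ C, ‖a - b‖ ≤ D) {g ghat x u : H} (hu : u ∈ C)
    (hmin : IsMinOn (fun v => ⟪v, ghat⟫) C u) :
    frankWolfeGap C g x ≤ ⟪u - x, -g⟫ + D * ‖g - ghat‖ := by
  refine csSup_le ⟨_, u, hu, rfl⟩ ?_
  rintro _ ⟨v, hv, rfl⟩
  have hsplit : ⟪v - x, -g⟫ - ⟪u - x, -g⟫ = ⟪v - u, ghat - g⟫ + (⟪u, ghat⟫ - ⟪v, ghat⟫) := by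
    simp only [inner_sub_left, inner_sub_right, inner_neg_right]
    ring
  have herror : ⟪v - u, ghat - g⟫ ≤ D * ‖g - ghat‖ :=
    calc ⟪v - u, ghat - g⟫ ≤ ‖v - u‖ * ‖ghat - g‖ := real_inner_le_norm _ _
      _ ≤ D * ‖g - ghat‖ := by
        rw [norm_sub_rev ghat]
        exact mul_le_mul_of_nonneg_right (hdiam v hv u hu) (norm_nonneg _)
  have hlmo : ⟪u, ghat⟫ ≤ ⟪v, ghat⟫ := isMinOn_iff.1 hmin v hv
  linarith

theorem mul_inner_sub_neg_le_of_smooth {F : H → ℝ} {g x u : H} {η L : ℝ}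
    (hsmooth : F (x + η • (u - x)) ≤ F x + ⟪g, η • (u - x)⟫ + L / 2 * ‖η • (u - x)‖ ^ 2) :
    η * ⟪u - x, -g⟫ ≤ F x - F (x + η • (u - x)) + L / 2 * η ^ 2 * ‖u - x‖ ^ 2 := by
  rw [real_inner_smul_right, norm_smul, Real.norm_eq_abs, mul_pow, sq_abs,
    real_inner_comm] at hsmooth
  rw [inner_neg_right]
  linarith

theorem frankWolfe_step_le {C : Set H} {D L η : ℝ} {F : H → ℝ} {g ghat x u : H}
    (hdiam : ∀ a ∈ C, ∀ b ∈ C, ‖a - b‖ ≤ D) (hL : 0 ≤ L) (hη : 0 ≤ η)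
    (hsmooth : ∀ y, F y ≤ F x + ⟪g, y - x⟫ + L / 2 * ‖y - x‖ ^ 2)
    (hx : x ∈ convexHull ℝ C) (hu : u ∈ C) (hmin : IsMinOn (fun v => ⟪v, ghat⟫) C u) :
    η * frankWolfeGap C g x ≤
      F x - F ((1 - η) • x + η • u) + D * (η * ‖g - ghat‖) + L / 2 * D ^ 2 * η ^ 2 := by
  have hcombo : (1 - η) • x + η • u = x + η • (u - x) := by module
  have hdescent := hsmooth (x + η • (u - x))
  rw [add_sub_cancel_left] at hdescent
  replace hdescent := mul_inner_sub_neg_le_of_smooth hdescent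
  have hcurv : L / 2 * η ^ 2 * ‖u - x‖ ^ 2 ≤ L / 2 * η ^ 2 * D ^ 2 := by
    gcongr
    exact norm_sub_le_of_mem_convexHull hdiam hu hx
  have hgap := mul_le_mul_of_nonneg_left
    (frankWolfeGap_le_of_isMinOn hdiam hu hmin (g := g) (x := x)) hη
  rw [hcombo]
  linarith

end

theorem frankWolfe_telescoped_descent_general
    {H : Type*} [NormedAddCommGroup H] [InnerProductSpace ℝ H]
    (C : Set H) (D : ℝ)
    (hdiam : ∀ a ∈ C, ∀ b ∈ C, ‖a - b‖ ≤ D)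
    (F : H → ℝ) (F' : H → H) (L : ℝ) (hL : 0 ≤ L)
    (hsmooth : ∀ x y : H, F y ≤ F x + ⟪F' x, y - x⟫ + L / 2 * ‖y - x‖ ^ 2)
    (T : ℕ) (hT : 1 ≤ T) (η : ℕ → ℝ) (hη : ∀ t, η t ∈ Set.Icc (0 : ℝ) 1)
    (x : ℕ → H) (hx1 : x 1 ∈ C) (ghat : ℕ → H) (u : ℕ → H)
    (hu_mem : ∀ t, 1 ≤ t → u t ∈ C)
    (hu_min : ∀ t, 1 ≤ t → ∀ v ∈ C, ⟪u t, ghat t⟫ ≤ ⟪v, ghat t⟫)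
    (hxrec : ∀ t, 1 ≤ t → x (t + 1) = (1 - η t) • x t + η t • u t) :
    ∑ t ∈ Finset.Icc 1 T, η t * sSup ((fun v => ⟪v - x t, -F' (x t)⟫) '' C) ≤
      F (x 1) - F (x (T + 1))
        + D * ∑ t ∈ Finset.Icc 1 T, η t * ‖F' (x t) - ghat t‖
        + L / 2 * D ^ 2 * ∑ t ∈ Finset.Icc 1 T, (η t) ^ 2 := by
  have hstep : ∀ t ∈ Icc 1 T, η t * frankWolfeGap C (F' (x t)) (x t) ≤
      F (x t) - F (x (t + 1)) + D * (η t * ‖F' (x t) - ghat t‖) + L / 2 * D ^ 2 * η t ^ 2 := by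
    intro t ht
    have ht : 1 ≤ t := (mem_Icc.1 ht).1
    rw [hxrec t ht]
    exact frankWolfe_step_le hdiam hL (hη t).1 (hsmooth (x t))
      (frankWolfe_iterate_mem_convexHull hη hx1 hu_mem hxrec t ht) (hu_mem t ht)
      (isMinOn_iff.2 (hu_min t ht))
  have htelescope : ∑ t ∈ Icc 1 T, (F (x t) - F (x (t + 1))) = F (x 1) - F (x (T + 1)) := by
    rw [← neg_sub, ← sum_Icc_sub hT (fun t => F (x t)), ← sum_neg_distrib]
    simp only [neg_sub]
  calc _ ≤ _ := sum_le_sum hstep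
    _ = _ := by rw [sum_add_distrib, sum_add_distrib, htelescope, ← mul_sum, ← mul_sum]

/-- Telescoped deterministic descent inequality for the stochastic Frank–Wolfe
iteration with inexact gradient estimates `ĝ_t`:
`∑_{t=1}^T η_t·𝒢(x_t) ≤ F(x₁) − F(x_{T+1}) + D·∑ η_t·‖∇F(x_t) − ĝ_t‖ + (L/2)·D²·∑ η_t²`. -/
theorem frankWolfe_telescoped_descent
    {H : Type*} [NormedAddCommGroup H] [InnerProductSpace ℝ H]
    (C : Set H) (hCne : C.Nonempty) (D : ℝ)
    (hdiam : ∀ a ∈ C, ∀ b ∈ C, ‖a - b‖ ≤ D)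
    (F : H → ℝ) (F' : H → H) (L : ℝ) (hL : 0 ≤ L)
    (hdiff : ∀ z : H, HasFDerivAt F (innerSL ℝ (F' z)) z)
    (hsmooth : ∀ x y : H, F y ≤ F x + ⟪F' x, y - x⟫ + L / 2 * ‖y - x‖ ^ 2)
    (T : ℕ) (hT : 1 ≤ T) (η : ℕ → ℝ) (hη : ∀ t, η t ∈ Set.Icc (0 : ℝ) 1)
    (x : ℕ → H) (hx1 : x 1 ∈ C) (ghat : ℕ → H) (u : ℕ → H)
    (hu_mem : ∀ t, 1 ≤ t → u t ∈ C)
    (hu_min : ∀ t, 1 ≤ t → ∀ v ∈ C, ⟪u t, ghat t⟫ ≤ ⟪v, ghat t⟫)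
    (hxrec : ∀ t, 1 ≤ t → x (t + 1) = (1 - η t) • x t + η t • u t) :
    ∑ t ∈ Finset.Icc 1 T, η t * sSup ((fun v => ⟪v - x t, -F' (x t)⟫) '' C) ≤
      F (x 1) - F (x (T + 1))
        + D * ∑ t ∈ Finset.Icc 1 T, η t * ‖F' (x t) - ghat t‖
        + L / 2 * D ^ 2 * ∑ t ∈ Finset.Icc 1 T, (η t) ^ 2 :=
  frankWolfe_telescoped_descent_general C D hdiam F F' L hL hsmooth T hT η hη x hx1 ghat u hu_mem
    hu_min hxrec
end

section
/- Let n ≥ 1, λ > 0, let F : (Fin n → ℝ) → ℝ be differentiable at a point x with gradient ∇F(x) (with respect to the Euclidean inner product), and suppose |xᵢ| ≤ 1/λ for all i. Define the Frank–Wolfe gap 𝒢(x) := sup { ⟨v − x, −∇F(x)⟩ : v : Fin n → ℝ with |vᵢ| ≤ 1/λ for all i }. Then 𝒢(x) = 0 if and only if ⟨−λ·x, ∇F(x)⟩ = ∑ᵢ |(∇F(x))ᵢ|, i.e., if and only if x satisfies the KKT characterization ⟨−λx, ∇F(x)⟩ = ‖∇F(x)‖₁ of the constrained problem min_{‖x‖∞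 ≤ 1/λ} F(x). -/
/-!
The Frank–Wolfe gap over the box `{v | ∀ i, |v i| ≤ r}` is the support function of the box at
`-∇F(x)` shifted by `⟨x, ∇F(x)⟩`, and that support function is `r‖∇F(x)‖₁`, attained at
`v = -r · sign ∇F(x)`. With `r = 1/λ` the gap is therefore `‖∇F(x)‖₁ / λ + ⟨x, ∇F(x)⟩`, which
vanishes exactly when `⟨-λx, ∇F(x)⟩ = ‖∇F(x)‖₁`.
-/

open Finset

section Box

variable {ι : Type*} [Fintype ι]

theorem sum_mul_le_mul_sum_abs {r : ℝ} {v : ι → ℝ} (hv : ∀ i, |v i| ≤ r) (g : ι → ℝ) :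
    ∑ i, v i * g i ≤ r * ∑ i, |g i| := by
  rw [mul_sum]
  refine sum_le_sum fun i _ => ?_
  calc v i * g i ≤ |v i * g i| := le_abs_self _
    _ = |v i| * |g i| := abs_mul _ _
    _ ≤ r * |g i| := by gcongr; exact hv i

theorem isGreatest_sum_mul_of_abs_le {r : ℝ} (hr : 0 ≤ r) (g : ι → ℝ) :
    IsGreatest {s | ∃ v : ι → ℝ, (∀ i, |v i| ≤ r) ∧ s = ∑ i, v i * g i} (r * ∑ i, |g i|) := by
  refine ⟨⟨fun i => r * SignType.sign (g i), fun i => ?_, ?_⟩, ?_⟩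
  · have hsign : |(SignType.sign (g i) : ℝ)| ≤ 1 := by
      cases SignType.sign (g i) <;> simp
    rw [abs_mul, abs_of_nonneg hr]
    exact mul_le_of_le_one_right hr hsign
  · simp only [mul_sum, mul_assoc, sign_mul_self]
  · rintro _ ⟨v, hv, rfl⟩
    exact sum_mul_le_mul_sum_abs hv g

theorem isGreatest_frankWolfeGap_box {r : ℝ} (hr : 0 ≤ r) (x g : ι → ℝ) :
    IsGreatest {s | ∃ v : ι → ℝ, (∀ i, |v i| ≤ r) ∧ s = ∑ i, (v i - x i) * -(g i)}
      (r * ∑ i, |g i| + ∑ i, x i * g i) := by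
  have hsplit (v : ι → ℝ) :
      ∑ i, (v i - x i) * -(g i) = ∑ i, v i * -(g i) + ∑ i, x i * g i := by
    rw [← sum_add_distrib]
    exact sum_congr rfl fun i _ => by ring
  obtain ⟨⟨v, hv, hv_max⟩, hbound⟩ := isGreatest_sum_mul_of_abs_le hr (-g)
  simp only [Pi.neg_apply, abs_neg] at hv_max hbound
  refine ⟨⟨v, hv, by rw [hsplit, ← hv_max]⟩, ?_⟩
  rintro _ ⟨w, hw, rfl⟩
  rw [hsplit]
  gcongr
  exact hbound ⟨w, hw, rfl⟩

end Box

theorem frankWolfe_gap_zero_iff_kkt_general (n : ℕ) (lam : ℝ) (hlam : 0 < lam)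
    (x : Fin n → ℝ) (gradF : Fin n → ℝ) :
    sSup {r : ℝ | ∃ v : Fin n → ℝ, (∀ i, |v i| ≤ 1 / lam) ∧
        r = ∑ i : Fin n, (v i - x i) * (-(gradF i))} = 0 ↔
      ∑ i : Fin n, (-(lam * x i)) * gradF i = ∑ i : Fin n, |gradF i| := by
  rw [(isGreatest_frankWolfeGap_box (one_div_nonneg.2 hlam.le) x gradF).csSup_eq]
  have hkkt : ∑ i, (-(lam * x i)) * gradF i = -lam * ∑ i, x i * gradF i := by
    rw [mul_sum]
    exact sum_congr rfl fun i _ => by ring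
  rw [hkkt]
  field_simp
  constructor <;> intro h <;> linarith

/-- Vanishing of the Frank–Wolfe gap over the ℓ∞-ball of radius `1/λ` at a feasible
point `x` is equivalent to the KKT characterization `⟨−λx, ∇F(x)⟩ = ‖∇F(x)‖₁` of the
problem `min_{‖x‖∞ ≤ 1/λ} F(x)`. -/
theorem frankWolfe_gap_zero_iff_kkt (n : ℕ) (hn : 1 ≤ n) (lam : ℝ) (hlam : 0 < lam)
    (F : (Fin n → ℝ) → ℝ) (x : Fin n → ℝ) (gradF : Fin n → ℝ)
    (φ : (Fin n → ℝ) →L[ℝ] ℝ) (hdiff : HasFDerivAt F φ x)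
    (hφ : ∀ v : Fin n → ℝ, φ v = ∑ i : Fin n, gradF i * v i)
    (hfeas : ∀ i, |x i| ≤ 1 / lam) :
    sSup {r : ℝ | ∃ v : Fin n → ℝ, (∀ i, |v i| ≤ 1 / lam) ∧
        r = ∑ i : Fin n, (v i - x i) * (-(gradF i))} = 0 ↔
      ∑ i : Fin n, (-(lam * x i)) * gradF i = ∑ i : Fin n, |gradF i| :=
  frankWolfe_gap_zero_iff_kkt_general n lam hlam x gradF
end
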